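/- arXiv:1610.00453 — 5 statements merged into one kernel-verified Lean document; each statement's English description precedes it below -/
import Mathlib

section
/- Let O : Λ × 𝒬 → ℝ be measurable with q ↦ O(λ,q)·p_a(λ,q) integrable. Then E_a[(ζ,q) ↦ g_a^λ(ζ,q)·O(λ,q)] = E[O|λ] · p_a^Λ(λ). Consequently, if p_a^Λ(λ) > 0, the conditional expectation of the observable given λ equals the ratio of expectations E[O|λ] = E_a[(ζ,q) ↦ g_a^λ(ζ,q)·O(λ,q)] / E_a[g_a^λ]. -/
/-! The weight is built so that `g_a^λ(ζ,q) p_a(ζ,q) = p_a(λ,q) K(λ,ζ)`; since `K(λ,·)` sums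
to one, `E_a[g_a^λ F] = ∫ F p_a(λ,·)` for every `F : 𝒬 → ℝ`. With `F = O(λ,·)` this is
`E[O|λ] p_a^Λ(λ)`, and with `F = 1` it is `p_a^Λ(λ)`, which gives the ratio. -/

open MeasureTheory Real Finset

namespace ExpandedEnsemble

variable {Λ Q : Type*}

/-- Partition function of the expanded ensemble with biasing potential `a`. -/
noncomputable def Za [Fintype Λ] [MeasurableSpace Q] (μ : Measure Q)
    (U : Λ → Q → ℝ) (a : Λ → ℝ) : ℝ :=
  ∑ ζ : Λ, ∫ q, Real.exp (a ζ - U ζ q) ∂μ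

/-- Expanded-ensemble probability density `p_a(ζ,q) = exp(a(ζ) − U(ζ,q))/Z_a`. -/
noncomputable def pEE [Fintype Λ] [MeasurableSpace Q] (μ : Measure Q)
    (U : Λ → Q → ℝ) (a : Λ → ℝ) (ζ : Λ) (q : Q) : ℝ :=
  Real.exp (a ζ - U ζ q) / Za μ U a

/-- Expectation `E_a[F] = Σ_ζ ∫ F(ζ,q) p_a(ζ,q) dμ(q)` in the expanded ensemble. -/
noncomputable def Ea [Fintype Λ] [MeasurableSpace Q] (μ : Measure Q)
    (U : Λ → Q → ℝ) (a : Λ → ℝ) (F : Λ → Q → ℝ) : ℝ :=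
  ∑ ζ : Λ, ∫ q, F ζ q * pEE μ U a ζ q ∂μ

/-- Marginal probability of the external parameter, `p_a^Λ(λ) = ∫ p_a(λ,q) dμ(q)`. -/
noncomputable def pLam [Fintype Λ] [MeasurableSpace Q] (μ : Measure Q)
    (U : Λ → Q → ℝ) (a : Λ → ℝ) (l : Λ) : ℝ :=
  ∫ q, pEE μ U a l q ∂μ

/-- Marginal probability of the configuration, `p_a^𝒬(q) = Σ_ζ p_a(ζ,q)`. -/
noncomputable def pQm [Fintype Λ] [MeasurableSpace Q] (μ : Measure Q)
    (U : Λ → Q → ℝ) (a : Λ → ℝ) (q : Q) : ℝ :=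
  ∑ ζ : Λ, pEE μ U a ζ q

/-- Generic weighing function `g_a^λ(ζ,q) = (p_a(λ,q)/p_a(ζ,q)) K(λ,ζ)`. -/
noncomputable def gW [Fintype Λ] [MeasurableSpace Q] (μ : Measure Q)
    (U : Λ → Q → ℝ) (a : Λ → ℝ) (K : Λ → Λ → ℝ) (l ζ : Λ) (q : Q) : ℝ :=
  (pEE μ U a l q / pEE μ U a ζ q) * K l ζ

/-- Conditional probability of `λ` given `q`:
`π_a^λ(q) = exp(a(λ) − U(λ,q)) / Σ_ζ exp(a(ζ) − U(ζ,q))`. -/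
noncomputable def piL [Fintype Λ] (U : Λ → Q → ℝ) (a : Λ → ℝ) (l : Λ) (q : Q) : ℝ :=
  Real.exp (a l - U l q) / ∑ ζ : Λ, Real.exp (a ζ - U ζ q)

/-- Conditional expectation of the observable given `λ`:
`E[O|λ] = ∫ O(λ,q) π(q|λ) dμ(q)` with `π(q|λ) = p_a(λ,q)/p_a^Λ(λ)`. -/
noncomputable def condE [Fintype Λ] [MeasurableSpace Q] (μ : Measure Q)
    (U : Λ → Q → ℝ) (a : Λ → ℝ) (O : Λ → Q → ℝ) (l : Λ) : ℝ :=
  ∫ q, O l q * (pEE μ U a l q / pLam μ U a l) ∂μ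

/-- Variance `Var_a[F] = E_a[F²] − (E_a[F])²`. -/
noncomputable def VarA [Fintype Λ] [MeasurableSpace Q] (μ : Measure Q)
    (U : Λ → Q → ℝ) (a : Λ → ℝ) (F : Λ → Q → ℝ) : ℝ :=
  Ea μ U a (fun ζ q => F ζ q ^ 2) - (Ea μ U a F) ^ 2

/-- Conditional weight `w_a(ζ,q) = p_a(ζ,q)/p_a^𝒬(q)`. -/
noncomputable def wA [Fintype Λ] [MeasurableSpace Q] (μ : Measure Q)
    (U : Λ → Q → ℝ) (a : Λ → ℝ) (ζ : Λ) (q : Q) : ℝ :=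
  pEE μ U a ζ q / pQm μ U a q

/-- Conditional variance of `F` given `q`. -/
noncomputable def condVar [Fintype Λ] [MeasurableSpace Q] (μ : Measure Q)
    (U : Λ → Q → ℝ) (a : Λ → ℝ) (F : Λ → Q → ℝ) (q : Q) : ℝ :=
  ∑ ζ : Λ, F ζ q ^ 2 * wA μ U a ζ q - (∑ ζ : Λ, F ζ q * wA μ U a ζ q) ^ 2

/-- Expectation with respect to the marginal of `q`: `E_a^𝒬[h] = ∫ h(q) p_a^𝒬(q) dμ(q)`. -/
noncomputable def EQm [Fintype Λ] [MeasurableSpace Q] (μ : Measure Q)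
    (U : Λ → Q → ℝ) (a : Λ → ℝ) (h : Q → ℝ) : ℝ :=
  ∫ q, h q * pQm μ U a q ∂μ

/-- Variance with respect to the marginal of `q`. -/
noncomputable def VarQ [Fintype Λ] [MeasurableSpace Q] (μ : Measure Q)
    (U : Λ → Q → ℝ) (a : Λ → ℝ) (h : Q → ℝ) : ℝ :=
  EQm μ U a (fun q => h q ^ 2) - (EQm μ U a h) ^ 2

/-- Partition function of the unbiased expanded ensemble. -/
noncomputable def Z0 [Fintype Λ] [MeasurableSpace Q] (μ : Measure Q)
    (U : Λ → Q → ℝ) : ℝ :=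
  ∑ ζ : Λ, ∫ q, Real.exp (-U ζ q) ∂μ

/-- Unbiased expanded-ensemble density `p_0(ζ,q) = exp(−U(ζ,q))/Z_0`. -/
noncomputable def p0 [Fintype Λ] [MeasurableSpace Q] (μ : Measure Q)
    (U : Λ → Q → ℝ) (ζ : Λ) (q : Q) : ℝ :=
  Real.exp (-U ζ q) / Z0 μ U

/-- Unbiased total expectation `E[O] = Σ_ζ ∫ O(ζ,q) p_0(ζ,q) dμ(q)`. -/
noncomputable def E0 [Fintype Λ] [MeasurableSpace Q] (μ : Measure Q)
    (U : Λ → Q → ℝ) (O : Λ → Q → ℝ) : ℝ :=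
  ∑ ζ : Λ, ∫ q, O ζ q * p0 μ U ζ q ∂μ

/-- Modified generic weighing function `𝕘_a^λ(ζ,q) = exp(−a(λ)) g_a^λ(ζ,q)`. -/
noncomputable def gMod [Fintype Λ] [MeasurableSpace Q] (μ : Measure Q)
    (U : Λ → Q → ℝ) (a : Λ → ℝ) (K : Λ → Λ → ℝ) (l ζ : Λ) (q : Q) : ℝ :=
  Real.exp (-a l) * gW μ U a K l ζ q

/-- Total modified weighing function `𝕘_a = Σ_λ 𝕘_a^λ`. -/
noncomputable def gModT [Fintype Λ] [MeasurableSpace Q] (μ : Measure Q)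
    (U : Λ → Q → ℝ) (a : Λ → ℝ) (K : Λ → Λ → ℝ) (ζ : Λ) (q : Q) : ℝ :=
  ∑ l : Λ, gMod μ U a K l ζ q

/-- Conditioned modified weighing function
`𝕟_a^λ(q) = exp(−U(λ,q)) / Σ_ζ exp(a(ζ) − U(ζ,q))`. -/
noncomputable def nMod [Fintype Λ] (U : Λ → Q → ℝ) (a : Λ → ℝ) (l : Λ) (q : Q) : ℝ :=
  Real.exp (-U l q) / ∑ ζ : Λ, Real.exp (a ζ - U ζ q)

/-- Total conditioned modified weighing function `𝕟_a = Σ_λ 𝕟_a^λ`. -/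
noncomputable def nModT [Fintype Λ] (U : Λ → Q → ℝ) (a : Λ → ℝ) (q : Q) : ℝ :=
  ∑ l : Λ, nMod U a l q

end ExpandedEnsemble

open MeasureTheory ExpandedEnsemble

theorem integral_mul_div_integral_mul_integral {Q : Type*} [MeasurableSpace Q] {μ : Measure Q}
    {f : Q → ℝ} (hf_nonneg : 0 ≤ f) (hf : Integrable f μ) (g : Q → ℝ) :
    (∫ q, g q * (f q / ∫ x, f x ∂μ) ∂μ) * ∫ x, f x ∂μ = ∫ q, g q * f q ∂μ := by
  by_cases h0 : ∫ x, f x ∂μ = 0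
  · -- a nonnegative function with zero integral vanishes a.e., and so does `g * f`
    have hf_ae : f =ᵐ[μ] 0 := (integral_eq_zero_iff_of_nonneg hf_nonneg hf).mp h0
    rw [h0, mul_zero, integral_eq_zero_of_ae]
    filter_upwards [hf_ae] with q hq
    simp [hq]
  · simp_rw [mul_div_assoc', integral_div, div_mul_cancel₀ _ h0]

namespace ExpandedEnsemble

variable {Λ Q : Type*} [Fintype Λ] [MeasurableSpace Q] {μ : Measure Q} {U : Λ → Q → ℝ}
  {a : Λ → ℝ}

theorem pEE_pos (hZ : 0 < Za μ U a) (ζ : Λ) (q : Q) : 0 < pEE μ U a ζ q :=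
  div_pos (Real.exp_pos _) hZ

theorem integrable_pEE {ζ : Λ} (hInt : Integrable (fun q => Real.exp (a ζ - U ζ q)) μ) :
    Integrable (pEE μ U a ζ) μ :=
  hInt.div_const _

theorem gW_mul_pEE (hZ : 0 < Za μ U a) (K : Λ → Λ → ℝ) (l ζ : Λ) (q : Q) :
    gW μ U a K l ζ q * pEE μ U a ζ q = pEE μ U a l q * K l ζ := by
  have := (pEE_pos hZ ζ q).ne'
  unfold gW
  field_simp

theorem Ea_gW_mul (hZ : 0 < Za μ U a) {K : Λ → Λ → ℝ} {l : Λ} (hK : ∑ ζ : Λ, K l ζ = 1)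
    (F : Q → ℝ) :
    Ea μ U a (fun ζ q => gW μ U a K l ζ q * F q) = ∫ q, F q * pEE μ U a l q ∂μ := calc
  Ea μ U a (fun ζ q => gW μ U a K l ζ q * F q)
      = ∑ ζ : Λ, (∫ q, F q * pEE μ U a l q ∂μ) * K l ζ := by
        refine Finset.sum_congr rfl fun ζ _ => ?_
        rw [← integral_mul_const]
        congr 1 with q
        rw [mul_right_comm, gW_mul_pEE hZ]
        ring
  _ = ∫ q, F q * pEE μ U a l q ∂μ := by rw [← Finset.mul_sum, hK, mul_one]

theorem Ea_gW (hZ : 0 < Za μ U a) {K : Λ → Λ → ℝ} {l : Λ} (hK : ∑ ζ : Λ, K l ζ = 1) :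
    Ea μ U a (gW μ U a K l) = pLam μ U a l := by
  simpa [pLam] using Ea_gW_mul hZ hK 1

theorem condE_mul_pLam (hZ : 0 < Za μ U a) {l : Λ}
    (hInt : Integrable (fun q => Real.exp (a l - U l q)) μ) (O : Λ → Q → ℝ) :
    condE μ U a O l * pLam μ U a l = ∫ q, O l q * pEE μ U a l q ∂μ :=
  integral_mul_div_integral_mul_integral (fun q => (pEE_pos hZ l q).le) (integrable_pEE hInt) _

end ExpandedEnsemble

theorem conditional_expectation_as_ratio_general
    {Λ Q : Type*} [Fintype Λ] [MeasurableSpace Q]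
    (μ : Measure Q)
    (U : Λ → Q → ℝ) (a : Λ → ℝ)
    (hInt : ∀ ζ, Integrable (fun q => Real.exp (a ζ - U ζ q)) μ)
    (hZ : 0 < Za μ U a)
    (K : Λ → Λ → ℝ) (hK : ∀ l : Λ, ∑ ζ : Λ, K l ζ = 1)
    (l : Λ) (O : Λ → Q → ℝ) :
    Ea μ U a (fun ζ q => gW μ U a K l ζ q * O l q) = condE μ U a O l * pLam μ U a l
    ∧ (0 < pLam μ U a l →
        condE μ U a O l =
          Ea μ U a (fun ζ q => gW μ U a K l ζ q * O l q) / Ea μ U a (gW μ U a K l)) := by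
  have hEa : Ea μ U a (fun ζ q => gW μ U a K l ζ q * O l q) = condE μ U a O l * pLam μ U a l :=
    (Ea_gW_mul hZ (hK l) (O l)).trans (condE_mul_pLam hZ (hInt l) O).symm
  refine ⟨hEa, fun hpos => ?_⟩
  rw [hEa, Ea_gW hZ (hK l), mul_div_cancel_right₀ _ hpos.ne']

/-- `E_a[g_a^λ · O(λ,·)] = E[O|λ] · p_a^Λ(λ)`; consequently, if `p_a^Λ(λ) > 0`, the
conditional expectation of the observable given `λ` is the ratio of expectations
`E[O|λ] = E_a[g_a^λ O(λ,·)] / E_a[g_a^λ]`. -/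
theorem conditional_expectation_as_ratio
    {Λ Q : Type*} [Fintype Λ] [Nonempty Λ] [MeasurableSpace Q]
    (μ : Measure Q) [SigmaFinite μ]
    (U : Λ → Q → ℝ) (hU : ∀ ζ, Measurable (U ζ)) (a : Λ → ℝ)
    (hInt : ∀ ζ, Integrable (fun q => Real.exp (a ζ - U ζ q)) μ)
    (hZ : 0 < Za μ U a)
    (K : Λ → Λ → ℝ) (hK : ∀ l : Λ, ∑ ζ : Λ, K l ζ = 1)
    (l : Λ) (O : Λ → Q → ℝ) (hO : ∀ ζ, Measurable (O ζ))
    (hOint : Integrable (fun q => O l q * pEE μ U a l q) μ) :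
    Ea μ U a (fun ζ q => gW μ U a K l ζ q * O l q) = condE μ U a O l * pLam μ U a l
    ∧ (0 < pLam μ U a l →
        condE μ U a O l =
          Ea μ U a (fun ζ q => gW μ U a K l ζ q * O l q) / Ea μ U a (gW μ U a K l)) :=
  conditional_expectation_as_ratio_general μ U a hInt hZ K hK l O
end

section
/- Let q̄_1, …, q̄_M ∈ 𝒬 be a finite sample and suppose M̂_λ := Σ_{m=1}^M π_a^λ(q̄_m) is positive for every λ ∈ Λ. Define Â(λ) := a(λ) − ln M̂_λ. Then for every λ ∈ Λ and every observable O : Λ × 𝒬 → ℝ, the self-consistent (STWHAM/MBAR-type) reweighting estimator with conditioned sample sizes equals the adiabatic reweighting estimator: Σ_{m=1}^M O(λ,q̄_m) · exp(Â(λ) − U(λ,q̄_m)) / Σ_{ζ∈Λ} M̂_ζ · exp(Â(ζ) − U(ζ,q̄_m)) = Σ_{m=1}^M π_a^λ(q̄_m) O(λ,q̄_m) / Σ_{m=1}^M π_a^λ(q̄_m). -/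
open MeasureTheory Real Finset

open ExpandedEnsemble

/-- **Conditioned self-consistent reweighting equals adiabatic reweighting.**  With
conditioned sample sizes `M̂_λ = Σ_m π_a^λ(q̄_m) > 0` and free energies
`Â(λ) = a(λ) − ln M̂_λ`, the STWHAM/MBAR-type self-consistent reweighting estimator
coincides with the adiabatic reweighting estimator:
`Σ_m O(λ,q̄_m) exp(Â(λ)−U(λ,q̄_m)) / Σ_ζ M̂_ζ exp(Â(ζ)−U(ζ,q̄_m))`
`= Σ_m π_a^λ(q̄_m) O(λ,q̄_m) / Σ_m π_a^λ(q̄_m)`. -/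
theorem conditioned_self_consistent_eq_adiabatic_reweighting
    {Λ Q : Type*} [Fintype Λ] [Nonempty Λ]
    (U : Λ → Q → ℝ) (a : Λ → ℝ)
    {M : ℕ} (qs : Fin M → Q)
    (Mh : Λ → ℝ) (hMh : ∀ l : Λ, Mh l = ∑ m : Fin M, piL U a l (qs m))
    (hMpos : ∀ l : Λ, 0 < Mh l)
    (Ah : Λ → ℝ) (hAh : ∀ l : Λ, Ah l = a l - Real.log (Mh l))
    (l : Λ) (O : Λ → Q → ℝ) :
    ∑ m : Fin M, O l (qs m) * Real.exp (Ah l - U l (qs m)) /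
        (∑ ζ : Λ, Mh ζ * Real.exp (Ah ζ - U ζ (qs m)))
      = (∑ m : Fin M, piL U a l (qs m) * O l (qs m)) / ∑ m : Fin M, piL U a l (qs m) := by
  have key : ∀ ζ : Λ, ∀ q : Q, Mh ζ * Real.exp (Ah ζ - U ζ q) = Real.exp (a ζ - U ζ q) := by
    intro ζ q
    rw [hAh, sub_right_comm, Real.exp_sub, Real.exp_log (hMpos ζ),
      mul_div_cancel₀ _ (hMpos ζ).ne']
  have hden : ∀ m : Fin M, (∑ ζ : Λ, Mh ζ * Real.exp (Ah ζ - U ζ (qs m)))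
      = ∑ ζ : Λ, Real.exp (a ζ - U ζ (qs m)) := by
    intro m; exact Finset.sum_congr rfl (fun ζ _ => key ζ (qs m))
  have hterm : ∀ m : Fin M, O l (qs m) * Real.exp (Ah l - U l (qs m)) /
      (∑ ζ : Λ, Mh ζ * Real.exp (Ah ζ - U ζ (qs m)))
      = piL U a l (qs m) * O l (qs m) / Mh l := by
    intro m
    rw [hden m]
    have := key l (qs m)
    rw [piL]
    have hMl := (hMpos l).ne'
    field_simp
    ring_nf
    linear_combination (norm := ring_nf) O l (qs m) * this
  rw [Finset.sum_congr rfl (fun m _ => hterm m), ← Finset.sum_div, ← hMh l]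
end

section
/- Assume Z_0 := Σ_{ζ∈Λ} ∫ exp(−U(ζ,q)) dμ(q) is also finite and positive, and let O : Λ × 𝒬 → ℝ be measurable with (ζ,q) ↦ O(ζ,q)·exp(−U(ζ,q)) integrable over Λ × 𝒬. Then the unbiased total expectation is recovered from biased sampling through the modified generic weighing functions: E[O] = E_a[(ζ,q) ↦ Σ_{λ∈Λ} O(λ,q) 𝕘_a^λ(ζ,q)] / E_a[𝕘_a]. In particular, taking O(ζ,q) = 1_{ζ=λ} yields exp(−A(λ)) := E[1_λ] = E_a[𝕘_a^λ] / E_a[𝕘_a], the free energy along the external parameter. -/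
open MeasureTheory Real Finset

/-!
The bias cancels pointwise: `𝕘_a^λ(ζ,q) p_a(ζ,q) = exp(−U(λ,q)) K(λ,ζ) / Z_a`. Summing over
`ζ` removes the kernel, so `E_a[Σ_λ O(λ,·) 𝕘_a^λ] = Σ_λ ∫ O(λ,q) exp(−U(λ,q)) dμ / Z_a`, which is
`Z_0 E[O] / Z_a`. For `O ≡ 1` this gives `E_a[𝕘_a] = Z_0 / Z_a`, and the quotient is `E[O]`.
-/

open MeasureTheory ExpandedEnsemble

namespace ExpandedEnsemble

variable {Λ Q : Type*} [Fintype Λ] [MeasurableSpace Q]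

noncomputable def boltzmannSum (μ : Measure Q) (U : Λ → Q → ℝ) (O : Λ → Q → ℝ) : ℝ :=
  ∑ ζ : Λ, ∫ q, O ζ q * Real.exp (-U ζ q) ∂μ

theorem Z0_eq_boltzmannSum_one (μ : Measure Q) (U : Λ → Q → ℝ) :
    Z0 μ U = boltzmannSum μ U 1 := by
  simp [Z0, boltzmannSum]

theorem E0_eq_boltzmannSum_div (μ : Measure Q) (U : Λ → Q → ℝ) (O : Λ → Q → ℝ) :
    E0 μ U O = boltzmannSum μ U O / Z0 μ U := by
  simp only [E0, p0, boltzmannSum, Finset.sum_div, ← integral_div, mul_div_assoc]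

theorem pEE_ne_zero {μ : Measure Q} {U : Λ → Q → ℝ} {a : Λ → ℝ} (hZ : Za μ U a ≠ 0)
    (ζ : Λ) (q : Q) : pEE μ U a ζ q ≠ 0 :=
  div_ne_zero (Real.exp_pos _).ne' hZ

theorem gMod_mul_pEE {μ : Measure Q} {U : Λ → Q → ℝ} {a : Λ → ℝ} (hZ : Za μ U a ≠ 0)
    (K : Λ → Λ → ℝ) (l ζ : Λ) (q : Q) :
    gMod μ U a K l ζ q * pEE μ U a ζ q = Real.exp (-U l q) * K l ζ / Za μ U a := by
  have hexp : Real.exp (-a l) * Real.exp (a l - U l q) = Real.exp (-U l q) := by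
    rw [← Real.exp_add]; ring_nf
  have hpζ := pEE_ne_zero hZ ζ q
  simp only [gMod, gW]
  rw [← hexp, pEE]
  field_simp

theorem Ea_sum_mul_gMod {μ : Measure Q} {U : Λ → Q → ℝ} {a : Λ → ℝ} (hZ : Za μ U a ≠ 0)
    {K : Λ → Λ → ℝ} (hK : ∀ l, ∑ ζ : Λ, K l ζ = 1) {O : Λ → Q → ℝ}
    (hO : ∀ ζ, Integrable (fun q => O ζ q * Real.exp (-U ζ q)) μ) :
    Ea μ U a (fun ζ q => ∑ l : Λ, O l q * gMod μ U a K l ζ q)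
      = boltzmannSum μ U O / Za μ U a := by
  have hpoint : ∀ ζ q, (∑ l : Λ, O l q * gMod μ U a K l ζ q) * pEE μ U a ζ q
      = ∑ l : Λ, O l q * Real.exp (-U l q) * (K l ζ / Za μ U a) := by
    intro ζ q
    simp only [Finset.sum_mul, mul_assoc, gMod_mul_pEE hZ, mul_div_assoc]
  calc Ea μ U a (fun ζ q => ∑ l : Λ, O l q * gMod μ U a K l ζ q)
      = ∑ ζ : Λ, ∑ l : Λ, (∫ q, O l q * Real.exp (-U l q) ∂μ) * (K l ζ / Za μ U a) := by
        simp only [Ea, hpoint]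
        refine Finset.sum_congr rfl fun ζ _ => ?_
        rw [integral_finsetSum _ fun l _ => (hO l).mul_const _]
        simp only [integral_mul_const]
    _ = ∑ l : Λ, (∫ q, O l q * Real.exp (-U l q) ∂μ) * ((∑ ζ : Λ, K l ζ) / Za μ U a) := by
        rw [Finset.sum_comm]
        simp only [Finset.sum_div, Finset.mul_sum]
    _ = boltzmannSum μ U O / Za μ U a := by
        simp only [hK, boltzmannSum, Finset.sum_div, mul_one_div]

theorem Ea_gModT {μ : Measure Q} {U : Λ → Q → ℝ} {a : Λ → ℝ} (hZ : Za μ U a ≠ 0)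
    {K : Λ → Λ → ℝ} (hK : ∀ l, ∑ ζ : Λ, K l ζ = 1)
    (hInt0 : ∀ ζ, Integrable (fun q => Real.exp (-U ζ q)) μ) :
    Ea μ U a (gModT μ U a K) = Z0 μ U / Za μ U a := by
  have hT : gModT μ U a K = fun ζ q => ∑ l : Λ, (1 : Λ → Q → ℝ) l q * gMod μ U a K l ζ q := by
    funext ζ q
    simp [gModT]
  rw [hT, Ea_sum_mul_gMod hZ hK (by simpa using hInt0), Z0_eq_boltzmannSum_one]

theorem E0_eq_Ea_sum_mul_gMod_div {μ : Measure Q} {U : Λ → Q → ℝ} {a : Λ → ℝ}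
    (hZ : Za μ U a ≠ 0) {K : Λ → Λ → ℝ} (hK : ∀ l, ∑ ζ : Λ, K l ζ = 1)
    (hInt0 : ∀ ζ, Integrable (fun q => Real.exp (-U ζ q)) μ) {O : Λ → Q → ℝ}
    (hO : ∀ ζ, Integrable (fun q => O ζ q * Real.exp (-U ζ q)) μ) :
    E0 μ U O = Ea μ U a (fun ζ q => ∑ l : Λ, O l q * gMod μ U a K l ζ q)
      / Ea μ U a (gModT μ U a K) := by
  rw [E0_eq_boltzmannSum_div, Ea_sum_mul_gMod hZ hK hO, Ea_gModT hZ hK hInt0,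
    div_div_div_cancel_right₀ hZ]

end ExpandedEnsemble

theorem total_expectation_generic_weighing_general
    {Λ Q : Type*} [Fintype Λ] [DecidableEq Λ] [MeasurableSpace Q]
    (μ : Measure Q)
    (U : Λ → Q → ℝ) (a : Λ → ℝ)
    (hZ : 0 < Za μ U a)
    (hInt0 : ∀ ζ, Integrable (fun q => Real.exp (-U ζ q)) μ)
    (K : Λ → Λ → ℝ) (hK : ∀ l : Λ, ∑ ζ : Λ, K l ζ = 1)
    (O : Λ → Q → ℝ)
    (hOint : ∀ ζ, Integrable (fun q => O ζ q * Real.exp (-U ζ q)) μ) :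
    E0 μ U O
        = Ea μ U a (fun ζ q => ∑ l : Λ, O l q * gMod μ U a K l ζ q)
            / Ea μ U a (gModT μ U a K)
    ∧ ∀ l : Λ,
        E0 μ U (fun ζ _ => if ζ = l then (1 : ℝ) else 0)
          = Ea μ U a (gMod μ U a K l) / Ea μ U a (gModT μ U a K) := by
  refine ⟨E0_eq_Ea_sum_mul_gMod_div hZ.ne' hK hInt0 hOint, fun l => ?_⟩
  have hIndicator : ∀ ζ, Integrable
      (fun q => (if ζ = l then (1 : ℝ) else 0) * Real.exp (-U ζ q)) μ := by
    intro ζ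
    split_ifs
    · simpa using hInt0 ζ
    · simp
  rw [E0_eq_Ea_sum_mul_gMod_div hZ.ne' hK hInt0 hIndicator]
  simp only [ite_mul, one_mul, zero_mul, Finset.sum_ite_eq', Finset.mem_univ, if_true]

/-- **Unbiased total expectations from biased sampling.**  With the modified generic
weighing functions `𝕘_a^λ = exp(−a(λ)) g_a^λ` and `𝕘_a = Σ_λ 𝕘_a^λ`,
`E[O] = E_a[(ζ,q) ↦ Σ_λ O(λ,q) 𝕘_a^λ(ζ,q)] / E_a[𝕘_a]`.  In particular, taking
`O(ζ,q) = 1_{ζ=λ}` yields `exp(−A(λ)) = E[1_λ] = E_a[𝕘_a^λ]/E_a[𝕘_a]`, the free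
energy along the external parameter. -/
theorem total_expectation_generic_weighing
    {Λ Q : Type*} [Fintype Λ] [Nonempty Λ] [DecidableEq Λ] [MeasurableSpace Q]
    (μ : Measure Q) [SigmaFinite μ]
    (U : Λ → Q → ℝ) (hU : ∀ ζ, Measurable (U ζ)) (a : Λ → ℝ)
    (hInt : ∀ ζ, Integrable (fun q => Real.exp (a ζ - U ζ q)) μ)
    (hZ : 0 < Za μ U a)
    (hInt0 : ∀ ζ, Integrable (fun q => Real.exp (-U ζ q)) μ)
    (hZ0 : 0 < Z0 μ U)
    (K : Λ → Λ → ℝ) (hK : ∀ l : Λ, ∑ ζ : Λ, K l ζ = 1)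
    (O : Λ → Q → ℝ) (hO : ∀ ζ, Measurable (O ζ))
    (hOint : ∀ ζ, Integrable (fun q => O ζ q * Real.exp (-U ζ q)) μ) :
    E0 μ U O
        = Ea μ U a (fun ζ q => ∑ l : Λ, O l q * gMod μ U a K l ζ q)
            / Ea μ U a (gModT μ U a K)
    ∧ ∀ l : Λ,
        E0 μ U (fun ζ _ => if ζ = l then (1 : ℝ) else 0)
          = Ea μ U a (gMod μ U a K l) / Ea μ U a (gModT μ U a K) :=
  total_expectation_generic_weighing_general μ U a hZ hInt0 K hK O hOint
end

section
/- Assume Z_0 := Σ_{ζ∈Λ} ∫ exp(−U(ζ,q)) dμ(q) is finite and positive. Then: (i) for every λ ∈ Λ and q ∈ 𝒬 with p_a^𝒬(q) > 0, the conditional expectation of the modified generic weighing function given q is Σ_{ζ∈Λ} 𝕘_a^λ(ζ,q) · (p_a(ζ,q)/p_a^𝒬(q)) = 𝕟_a^λ(q); and (ii) for every measurable O : Λ × 𝒬 → ℝ with (ζ,q) ↦ O(ζ,q)·exp(−U(ζ,q)) integrable, the conditioned (adiabatic reweighting) total-expectation formula holds: E[O] = E_a[q ↦ Σ_{λ∈Λ}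 𝕟_a^λ(q) O(λ,q)] / E_a[𝕟_a]. -/
open MeasureTheory Real Finset

open MeasureTheory ExpandedEnsemble

lemma ea_nmod_key {Λ Q : Type*} [Fintype Λ] [Nonempty Λ] [MeasurableSpace Q]
    (μ : Measure Q) (U : Λ → Q → ℝ) (hU : ∀ ζ, Measurable (U ζ)) (a : Λ → ℝ)
    (hZ : 0 < Za μ U a)
    (O : Λ → Q → ℝ)
    (hOint : ∀ ζ, Integrable (fun q => O ζ q * Real.exp (-U ζ q)) μ) :
    Ea μ U a (fun _ q => ∑ l : Λ, nMod U a l q * O l q)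
      = (∑ l : Λ, ∫ q, O l q * Real.exp (-U l q) ∂μ) / Za μ U a := by
  classical
  have hZne : Za μ U a ≠ 0 := ne_of_gt hZ
  set S : Q → ℝ := fun q => ∑ ζ : Λ, Real.exp (a ζ - U ζ q) with hS
  have hSpos : ∀ q, 0 < S q := fun q =>
    Finset.sum_pos (fun ζ _ => Real.exp_pos _) Finset.univ_nonempty
  have hSmeas : Measurable S :=
    Finset.measurable_sum _ fun ζ _ =>
      Real.measurable_exp.comp (measurable_const.sub (hU ζ))
  have hterm_int : ∀ l ζ : Λ, Integrable
      (fun q => O l q * Real.exp (-U l q) *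
        (Real.exp (a ζ - U ζ q) / (S q * Za μ U a))) μ := by
    intro l ζ
    have hmeas : AEStronglyMeasurable
        (fun q => Real.exp (a ζ - U ζ q) / (S q * Za μ U a)) μ :=
      ((Real.measurable_exp.comp (measurable_const.sub (hU ζ))).div
        (hSmeas.mul measurable_const)).aestronglyMeasurable
    have hbdd : ∀ q, ‖Real.exp (a ζ - U ζ q) / (S q * Za μ U a)‖ ≤ 1 / Za μ U a := by
      intro q
      have h1 : (0:ℝ) < S q * Za μ U a := mul_pos (hSpos q) hZ
      rw [Real.norm_eq_abs, abs_of_nonneg (by positivity)]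
      rw [div_le_div_iff₀ h1 hZ]
      have hle : Real.exp (a ζ - U ζ q) ≤ S q :=
        Finset.single_le_sum (f := fun ζ' => Real.exp (a ζ' - U ζ' q))
          (fun ζ' _ => (Real.exp_pos _).le) (Finset.mem_univ ζ)
      calc Real.exp (a ζ - U ζ q) * Za μ U a ≤ S q * Za μ U a :=
            mul_le_mul_of_nonneg_right hle hZ.le
        _ = 1 * (S q * Za μ U a) := by ring
    have := (hOint l).bdd_mul hmeas (Filter.Eventually.of_forall hbdd)
    refine this.congr (Filter.Eventually.of_forall fun q => ?_)
    ring
  have hpt : ∀ ζ q, (∑ l : Λ, nMod U a l q * O l q) * pEE μ U a ζ q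
      = ∑ l : Λ, O l q * Real.exp (-U l q) *
          (Real.exp (a ζ - U ζ q) / (S q * Za μ U a)) := by
    intro ζ q
    rw [Finset.sum_mul]
    refine Finset.sum_congr rfl fun l _ => ?_
    have h1 : S q ≠ 0 := ne_of_gt (hSpos q)
    simp only [nMod, pEE, ← hS]
    field_simp
    ring
  unfold Ea
  calc ∑ ζ : Λ, ∫ q, (∑ l : Λ, nMod U a l q * O l q) * pEE μ U a ζ q ∂μ
      = ∑ ζ : Λ, ∑ l : Λ, ∫ q, O l q * Real.exp (-U l q) *
          (Real.exp (a ζ - U ζ q) / (S q * Za μ U a)) ∂μ := by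
        refine Finset.sum_congr rfl fun ζ _ => ?_
        rw [show (fun q => (∑ l : Λ, nMod U a l q * O l q) * pEE μ U a ζ q)
            = fun q => ∑ l : Λ, O l q * Real.exp (-U l q) *
                (Real.exp (a ζ - U ζ q) / (S q * Za μ U a)) from funext (hpt ζ)]
        exact integral_finset_sum _ fun l _ => hterm_int l ζ
    _ = ∑ l : Λ, ∑ ζ : Λ, ∫ q, O l q * Real.exp (-U l q) *
          (Real.exp (a ζ - U ζ q) / (S q * Za μ U a)) ∂μ := Finset.sum_comm
    _ = ∑ l : Λ, ∫ q, O l q * Real.exp (-U l q) * (1 / Za μ U a) ∂μ := by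
        refine Finset.sum_congr rfl fun l _ => ?_
        rw [← integral_finset_sum _ fun ζ _ => hterm_int l ζ]
        refine integral_congr_ae (Filter.Eventually.of_forall fun q => ?_)
        have h1 : S q ≠ 0 := ne_of_gt (hSpos q)
        show (∑ i : Λ, O l q * Real.exp (-U l q) *
            (Real.exp (a i - U i q) / (S q * Za μ U a)))
          = O l q * Real.exp (-U l q) * (1 / Za μ U a)
        have hSq : (∑ ζ : Λ, Real.exp (a ζ - U ζ q)) = S q := rfl
        rw [← Finset.mul_sum, ← Finset.sum_div, hSq]
        congr 1
        rw [div_eq_div_iff (ne_of_gt (mul_pos (hSpos q) hZ)) hZne]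
        ring
    _ = (∑ l : Λ, ∫ q, O l q * Real.exp (-U l q) ∂μ) / Za μ U a := by
        rw [Finset.sum_div]
        refine Finset.sum_congr rfl fun l _ => ?_
        rw [show (fun q => O l q * Real.exp (-U l q) * (1 / Za μ U a))
            = fun q => (O l q * Real.exp (-U l q)) * (Za μ U a)⁻¹ from by
          funext q; rw [one_div]]
        rw [integral_mul_const, div_eq_mul_inv]

/-- **Conditioning the modified weighing functions.**  (i) For `p_a^𝒬(q) > 0`, the
conditional expectation of `𝕘_a^λ` given `q` is `𝕟_a^λ(q)`; (ii) the conditioned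
(adiabatic reweighting) total-expectation formula holds:
`E[O] = E_a[q ↦ Σ_λ 𝕟_a^λ(q) O(λ,q)] / E_a[𝕟_a]`. -/
theorem conditioned_total_expectation
    {Λ Q : Type*} [Fintype Λ] [Nonempty Λ] [MeasurableSpace Q]
    (μ : Measure Q) [SigmaFinite μ]
    (U : Λ → Q → ℝ) (hU : ∀ ζ, Measurable (U ζ)) (a : Λ → ℝ)
    (hInt : ∀ ζ, Integrable (fun q => Real.exp (a ζ - U ζ q)) μ)
    (hZ : 0 < Za μ U a)
    (hInt0 : ∀ ζ, Integrable (fun q => Real.exp (-U ζ q)) μ)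
    (hZ0 : 0 < Z0 μ U)
    (K : Λ → Λ → ℝ) (hK : ∀ l : Λ, ∑ ζ : Λ, K l ζ = 1) :
    (∀ (l : Λ) (q : Q), 0 < pQm μ U a q →
        ∑ ζ : Λ, gMod μ U a K l ζ q * (pEE μ U a ζ q / pQm μ U a q) = nMod U a l q)
    ∧ ∀ O : Λ → Q → ℝ, (∀ ζ, Measurable (O ζ)) →
        (∀ ζ, Integrable (fun q => O ζ q * Real.exp (-U ζ q)) μ) →
        E0 μ U O
          = Ea μ U a (fun _ q => ∑ l : Λ, nMod U a l q * O l q)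
              / Ea μ U a (fun _ q => nModT U a q) := by
  classical
  have hZne : Za μ U a ≠ 0 := ne_of_gt hZ
  have hZ0ne : Z0 μ U ≠ 0 := ne_of_gt hZ0
  constructor
  · intro l q hq
    have hSpos : (0:ℝ) < ∑ ζ : Λ, Real.exp (a ζ - U ζ q) :=
      Finset.sum_pos (fun ζ _ => Real.exp_pos _) Finset.univ_nonempty
    have hpE : ∀ ζ : Λ, pEE μ U a ζ q ≠ 0 := by
      intro ζ
      simp only [pEE]
      positivity
    have hstep : ∀ ζ : Λ, gMod μ U a K l ζ q * (pEE μ U a ζ q / pQm μ U a q)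
        = Real.exp (-a l) * pEE μ U a l q / pQm μ U a q * K l ζ := by
      intro ζ
      calc gMod μ U a K l ζ q * (pEE μ U a ζ q / pQm μ U a q)
          = (pEE μ U a l q / pEE μ U a ζ q * pEE μ U a ζ q) *
              (Real.exp (-a l) * K l ζ / pQm μ U a q) := by
            simp only [gMod, gW]; ring
        _ = Real.exp (-a l) * pEE μ U a l q / pQm μ U a q * K l ζ := by
            rw [div_mul_cancel₀ _ (hpE ζ)]; ring
    rw [Finset.sum_congr rfl fun ζ _ => hstep ζ, ← Finset.mul_sum, hK l, mul_one]
    have hpQ : pQm μ U a q = (∑ ζ : Λ, Real.exp (a ζ - U ζ q)) / Za μ U a := by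
      simp only [pQm, pEE, Finset.sum_div]
    have hE : Real.exp (-a l) * Real.exp (a l - U l q) = Real.exp (-U l q) := by
      rw [← Real.exp_add]; congr 1; ring
    rw [hpQ]
    simp only [pEE, nMod]
    rw [← mul_div_assoc, div_div_div_cancel_right₀ hZne, hE]
  · intro O hOm hOint
    have h1 : Ea μ U a (fun _ q => ∑ l : Λ, nMod U a l q * O l q)
        = (∑ l : Λ, ∫ q, O l q * Real.exp (-U l q) ∂μ) / Za μ U a :=
      ea_nmod_key μ U hU a hZ O hOint
    have h2 : Ea μ U a (fun _ q => nModT U a q)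
        = (∑ l : Λ, ∫ q, (1:ℝ) * Real.exp (-U l q) ∂μ) / Za μ U a := by
      rw [show (fun (_ : Λ) q => nModT U a q)
          = fun (_ : Λ) q => ∑ l : Λ, nMod U a l q * (1:ℝ) by
        funext ζ q; simp [nModT]]
      exact ea_nmod_key μ U hU a hZ (fun _ _ => (1:ℝ))
        (fun ζ => by simpa using hInt0 ζ)
    have h3 : (∑ l : Λ, ∫ q, (1:ℝ) * Real.exp (-U l q) ∂μ) = Z0 μ U := by
      simp [Z0]
    have h4 : E0 μ U O = (∑ l : Λ, ∫ q, O l q * Real.exp (-U l q) ∂μ) / Z0 μ U := by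
      unfold E0 p0
      rw [Finset.sum_div]
      refine Finset.sum_congr rfl fun ζ _ => ?_
      rw [div_eq_mul_inv, ← integral_mul_const]
      simp [div_eq_mul_inv, mul_assoc]
    rw [h1, h2, h3, h4, div_div_div_eq, mul_comm (Za μ U a) (Z0 μ U),
      mul_div_mul_right _ _ hZne]
end

section
/- Harmonic-coupling identity underlying the ξ-AR estimator: let ξ : 𝒬 → ℝ, U_0 : 𝒬 → ℝ, and R : Λ × ℝ → ℝ satisfy the normalization Σ_{ζ∈Λ} exp(−R(ζ,x)) = 1 for every x ∈ ℝ, and define the expanded potential U(λ,q) := U_0(q) + R(λ, ξ(q)) and the effective restraining potential ℬ_a(x) := ln Σ_{ζ∈Λ} exp(a(ζ) − R(ζ,x)). Then for every q ∈ 𝒬, the conditioned total weighing function satisfies 𝕟_a(q) := Σ_{λ∈Λ} exp(−U(λ,q)) / Σ_{ζ∈Λ} exp(a(ζ) − U(ζ,q)) = exp(−ℬ_a(ξ(q))); in particular the reweighting factor of each sampled configuration depends on q only through ξ(q). -/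
/-! The factor `exp (-U0 q)` splits off both sums. By the normalization it is all that is
left of the numerator, while the rest of the denominator is `exp (B (ξ q))`, so the ratio
is `exp (-B (ξ q))`. -/

open Finset Real

lemma sum_exp_const_add {ι : Type*} (s : Finset ι) (c : ℝ) (f : ι → ℝ) :
    ∑ i ∈ s, exp (c + f i) = exp c * ∑ i ∈ s, exp (f i) := by
  simp only [exp_add, mul_sum]

/-- **Harmonic-coupling identity underlying the ξ-AR estimator.**  If the restraining
potential satisfies the normalization `Σ_ζ exp(−R(ζ,x)) = 1` for every `x`, and the
expanded potential is `U(λ,q) = U_0(q) + R(λ,ξ(q))`, then the conditioned total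
weighing function satisfies
`𝕟_a(q) = Σ_λ exp(−U(λ,q)) / Σ_ζ exp(a(ζ) − U(ζ,q)) = exp(−ℬ_a(ξ(q)))`, with
`ℬ_a(x) = ln Σ_ζ exp(a(ζ) − R(ζ,x))`; in particular the reweighting factor of each
sampled configuration depends on `q` only through `ξ(q)`. -/
theorem harmonic_coupling_reweighting_factor
    {Λ Q : Type*} [Fintype Λ] [Nonempty Λ]
    (a : Λ → ℝ) (ξ : Q → ℝ) (U0 : Q → ℝ) (R : Λ → ℝ → ℝ)
    (hnorm : ∀ x : ℝ, ∑ ζ : Λ, Real.exp (-R ζ x) = 1)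
    (U : Λ → Q → ℝ) (hU : ∀ l q, U l q = U0 q + R l (ξ q))
    (B : ℝ → ℝ) (hB : ∀ x, B x = Real.log (∑ ζ : Λ, Real.exp (a ζ - R ζ x)))
    (q : Q) :
    (∑ l : Λ, Real.exp (-U l q)) / (∑ ζ : Λ, Real.exp (a ζ - U ζ q))
      = Real.exp (-B (ξ q)) := by
  have hnum : ∑ l, exp (-U l q) = exp (-U0 q) := by
    simp only [hU, neg_add, sum_exp_const_add, hnorm, mul_one]
  have hden : ∑ ζ, exp (a ζ - U ζ q) = exp (-U0 q + B (ξ q)) := by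
    have hpos : 0 < ∑ ζ, exp (a ζ - R ζ (ξ q)) :=
      sum_pos (fun ζ _ => exp_pos _) univ_nonempty
    rw [exp_add, hB, exp_log hpos, ← sum_exp_const_add]
    refine sum_congr rfl fun ζ _ => ?_
    rw [hU]
    ring_nf
  rw [hnum, hden, ← exp_sub]
  ring_nf
end
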